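/- arXiv:1603.08576 — 4 statements merged into one kernel-verified Lean document; each statement's English description precedes it below -/
import Mathlib

section
/- Let R be a one-dimensional Gorenstein commutative Noetherian local domain and I a nonzero ideal of R which is a trace ideal, i.e. I = τ(I). If I is not isomorphic to R as an R-module (equivalently, I is not free), then I ⊗_R Hom_R(I,R) has a nonzero torsion submodule, i.e. there is a nonzero element of I ⊗_R Hom_R(I,R) annihilated by a nonzero element of R. -/
open CategoryTheory TensorProduct

universe u

/-- The trace ideal of a module: the ideal generated by all images of maps `M →ₗ[R] R`. -/
def traceIdeal (R : Type u) (M : Type*) [CommRing R] [AddCommGroup M] [Module R M] :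
    Ideal R :=
  ⨆ f : M →ₗ[R] R, LinearMap.range f

/-- A commutative Noetherian local ring is Gorenstein if `Ext^i_R(k,R) = 0` for some
`i > dim R`, where `k` is the residue field. -/
def IsGorensteinLocalRing (R : Type u) [CommRing R] [IsLocalRing R] : Prop :=
  ∃ i : ℕ, ringKrullDim R < i ∧
    Subsingleton (((Ext R (ModuleCat.{u} R) i).obj
      (Opposite.op (ModuleCat.of R (IsLocalRing.ResidueField R)))).obj (ModuleCat.of R R))

/-!
Let `μ : I ⊗ I* → R` be the evaluation pairing. Any `z ∈ ker μ` is killed by every `a ∈ I`,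
since `a • (b ⊗ f) = a ⊗ f(b) • ι` with `ι : I ↪ R` the inclusion, so a nonzero kernel yields
the torsion element. If instead `μ` is injective, then, as `f(a) ∈ τ(I) = I`,
`a ⊗ f = f(a) ⊗ ι` for all `a, f`; hence `I ⊗ (I* / Rι) = 0` and Nakayama's lemma gives
`I* = Rι`. This fails in a one-dimensional local domain: for `0 ≠ x ∈ I ⊆ m`, some power of `m`
lies in `(x)`, so there is `y ∉ (x)` with `y m ⊆ (x)`, and multiplication by `y / x` is an
element of `I*` outside `Rι`.
-/

open IsLocalRing

theorem apply_mem_traceIdeal {R : Type*} {M : Type*} [CommRing R] [AddCommGroup M] [Module R M]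
    (f : M →ₗ[R] R) (m : M) : f m ∈ traceIdeal R M :=
  le_iSup (fun f : M →ₗ[R] R => LinearMap.range f) f (LinearMap.mem_range_self f m)

theorem IsLocalRing.subsingleton_of_subsingleton_tensorProduct {R M N : Type*} [CommRing R]
    [IsLocalRing R] [AddCommGroup M] [Module R M] [AddCommGroup N] [Module R N]
    [Module.Finite R M] [Module.Finite R N] [Nontrivial M] [Subsingleton (M ⊗[R] N)] :
    Subsingleton N := by
  -- `k ⊗ M ≠ 0` surjects onto `k`, so `k ⊗ N` is a quotient of `(k ⊗ M) ⊗ N ≅ k ⊗ (M ⊗ N) = 0`.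
  let k := ResidueField R
  have : Nontrivial (k ⊗[R] M) := by
    rw [← not_subsingleton_iff_nontrivial, subsingleton_tensorProduct]
    exact not_subsingleton M
  let b := Module.Basis.ofVectorSpace k (k ⊗[R] M)
  obtain ⟨i⟩ := b.index_nonempty
  have hsurj : Function.Surjective ((b.coord i).restrictScalars R) :=
    fun s => ⟨s • b i, by simp⟩
  have : Subsingleton ((k ⊗[R] M) ⊗[R] N) := (TensorProduct.assoc R k M N).toEquiv.subsingleton
  have : Subsingleton (k ⊗[R] N) := (LinearMap.rTensor_surjective N hsurj).subsingleton
  exact subsingleton_tensorProduct.mp this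

theorem Ideal.exists_notMem_mul_mem_of_pow_le {R : Type*} [CommSemiring R] {J m : Ideal R}
    (hJ : J ≠ ⊤) : ∀ {n : ℕ}, m ^ n ≤ J → ∃ y ∉ J, ∀ c ∈ m, y * c ∈ J
  | 0, h => absurd (top_le_iff.mp (by simpa using h)) hJ
  | n + 1, h => by
    by_cases hn : m ^ n ≤ J
    · exact exists_notMem_mul_mem_of_pow_le hJ hn
    · obtain ⟨y, hy, hyJ⟩ := SetLike.not_le_iff_exists.mp hn
      exact ⟨y, hyJ, fun c hc => h (pow_succ m n ▸ Ideal.mul_mem_mul hy hc)⟩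

theorem IsLocalRing.exists_notMem_span_singleton_mul_mem {R : Type*} [CommRing R] [IsDomain R]
    [IsNoetherianRing R] [IsLocalRing R] (hdim : ringKrullDim R = 1) {x : R} (hx0 : x ≠ 0)
    (hxm : x ∈ maximalIdeal R) :
    ∃ y ∉ Ideal.span {x}, ∀ c ∈ maximalIdeal R, y * c ∈ Ideal.span {x} := by
  have hrad := (ringKrullDim_eq_one_iff_of_isLocalRing_isDomain.mp hdim).2 x hx0
  obtain ⟨n, hn⟩ := Ideal.exists_pow_le_of_le_radical_of_fg hrad (IsNoetherian.noetherian _)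
  have hx : Ideal.span {x} ≠ ⊤ := ne_top_of_le_ne_top (maximalIdeal.isMaximal R).ne_top
    ((Ideal.span_singleton_le_iff_mem _).mpr hxm)
  exact Ideal.exists_notMem_mul_mem_of_pow_le hx hn

namespace Ideal

variable {R : Type*} [CommRing R] (I : Ideal R)

theorem mul_dual_apply_comm (f : Module.Dual R I) (b c : I) : (b : R) * f c = (c : R) * f b := by
  rw [← smul_eq_mul, ← map_smul, ← smul_eq_mul (c : R), ← map_smul]
  congr 1
  ext
  simp [mul_comm]

theorem smul_dual_eq_apply_smul_subtype (b : I) (f : Module.Dual R I) :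
    (b : R) • f = f b • I.subtype := by
  ext c
  simp [mul_dual_apply_comm I f b c, mul_comm]

theorem smul_eq_tmul_contractRight (a : I) (z : I ⊗[R] Module.Dual R I) :
    (a : R) • z = a ⊗ₜ (contractRight R I z • I.subtype) := by
  induction z using TensorProduct.induction_on with
  | zero => simp
  | tmul b f =>
    have hab : (a : R) • b = (b : R) • a := Subtype.ext (mul_comm _ _)
    rw [smul_tmul', hab, smul_tmul, smul_dual_eq_apply_smul_subtype, contractRight_apply]
  | add z w hz hw => rw [smul_add, hz, hw, map_add, add_smul, tmul_add]

theorem smul_eq_zero_of_contractRight_eq_zero (a : I) {z : I ⊗[R] Module.Dual R I}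
    (hz : contractRight R I z = 0) : (a : R) • z = 0 := by
  rw [smul_eq_tmul_contractRight, hz, zero_smul, tmul_zero]

section InjectiveContraction

variable {I}

theorem tmul_eq_apply_tmul_subtype (htr : traceIdeal R I ≤ I)
    (hinj : Function.Injective (contractRight R I)) (a : I) (f : Module.Dual R I) :
    a ⊗ₜ f = (⟨f a, htr (apply_mem_traceIdeal f a)⟩ : I) ⊗ₜ[R] I.subtype :=
  hinj (by simp)

theorem subsingleton_tensorProduct_quotient_span_subtype (htr : traceIdeal R I ≤ I)
    (hinj : Function.Injective (contractRight R I)) :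
    Subsingleton (I ⊗[R] (Module.Dual R I ⧸ R ∙ I.subtype)) := by
  refine subsingleton_of_forall_eq 0 fun w => ?_
  obtain ⟨z, rfl⟩ := LinearMap.lTensor_surjective I (Submodule.mkQ_surjective _) w
  induction z using TensorProduct.induction_on with
  | zero => simp
  | tmul a f =>
    rw [tmul_eq_apply_tmul_subtype htr hinj, LinearMap.lTensor_tmul, Submodule.mkQ_apply,
      (Submodule.Quotient.mk_eq_zero _).mpr (Submodule.mem_span_singleton_self _), tmul_zero]
  | add z w hz hw => rw [map_add, hz, hw, add_zero]

theorem span_subtype_eq_top [IsLocalRing R] [IsNoetherianRing R] (hI : I ≠ ⊥)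
    (htr : traceIdeal R I ≤ I) (hinj : Function.Injective (contractRight R I)) :
    (R ∙ I.subtype) = ⊤ := by
  have : Nontrivial I := Submodule.nontrivial_iff_ne_bot.mpr hI
  have := subsingleton_tensorProduct_quotient_span_subtype htr hinj
  exact Submodule.Quotient.subsingleton_iff.mp
    (subsingleton_of_subsingleton_tensorProduct (R := R) (M := I))

end InjectiveContraction

variable [IsDomain R]

theorem exists_dual_mul_eq_mul {x y : R} (hx0 : x ≠ 0) (hy : ∀ c ∈ I, y * c ∈ span {x}) :
    ∃ g : Module.Dual R I, ∀ c : I, g c * x = y * c := by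
  let e := LinearEquiv.toSpanNonzeroSingleton R R x hx0
  let g : Module.Dual R I :=
    e.symm.toLinearMap ∘ₗ LinearMap.codRestrict (R ∙ x) (y • I.subtype) fun c => hy c c.2
  refine ⟨g, fun c => ?_⟩
  have hc := e.apply_symm_apply ⟨y * c, hy c c.2⟩
  rw [Subtype.ext_iff, LinearEquiv.toSpanNonzeroSingleton_apply] at hc
  exact hc

theorem span_subtype_ne_top [IsNoetherianRing R] [IsLocalRing R] (hdim : ringKrullDim R = 1)
    (hI0 : I ≠ ⊥) (hI : I ≠ ⊤) : (R ∙ I.subtype) ≠ ⊤ := by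
  obtain ⟨x, hxI, hx0⟩ := I.ne_bot_iff.mp hI0
  have hIm := le_maximalIdeal hI
  obtain ⟨y, hy, hym⟩ := exists_notMem_span_singleton_mul_mem hdim hx0 (hIm hxI)
  obtain ⟨g, hg⟩ := I.exists_dual_mul_eq_mul hx0 fun c hc => hym c (hIm hc)
  intro htop
  obtain ⟨r, hr⟩ := Submodule.mem_span_singleton.mp (htop ▸ Submodule.mem_top : g ∈ R ∙ I.subtype)
  have hgx : g ⟨x, hxI⟩ = r * x := by simp [← hr]
  have hyx : y * x = x * r * x := by rw [mul_comm x r, ← hgx]; exact (hg ⟨x, hxI⟩).symm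
  exact hy (Ideal.mem_span_singleton.mpr ⟨r, mul_right_cancel₀ hx0 hyx⟩)

end Ideal

theorem trace_ideal_torsion_general (R : Type u) [CommRing R] [IsDomain R] [IsNoetherianRing R]
    [IsLocalRing R] (hdim : ringKrullDim R = 1)
    (I : Ideal R) (hI0 : I ≠ ⊥) (htrace : I = traceIdeal R I)
    (hnotfree : ¬ Nonempty (I ≃ₗ[R] R)) :
    ∃ x : I ⊗[R] (I →ₗ[R] R), x ≠ 0 ∧ ∃ r : R, r ≠ 0 ∧ r • x = 0 := by
  have hItop : I ≠ ⊤ := fun h => hnotfree ⟨LinearEquiv.ofTop I h⟩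
  have hnotinj : ¬ Function.Injective (contractRight R I) := fun hinj =>
    I.span_subtype_ne_top hdim hI0 hItop (I.span_subtype_eq_top hI0 htrace.ge hinj)
  obtain ⟨z, hμ, hz0⟩ : ∃ z, contractRight R I z = 0 ∧ z ≠ 0 := by
    simpa [injective_iff_map_eq_zero] using hnotinj
  obtain ⟨x, hxI, hx0⟩ := I.ne_bot_iff.mp hI0
  exact ⟨z, hz0, x, hx0, I.smul_eq_zero_of_contractRight_eq_zero ⟨x, hxI⟩ hμ⟩

/-- Let `R` be a one-dimensional Gorenstein commutative Noetherian local domain and `I` a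
nonzero trace ideal of `R`.  If `I` is not isomorphic to `R` as an `R`-module, then
`I ⊗_R Hom_R(I,R)` has a nonzero torsion element. -/
theorem trace_ideal_torsion (R : Type u) [CommRing R] [IsDomain R] [IsNoetherianRing R]
    [IsLocalRing R] (hdim : ringKrullDim R = 1) (hGor : IsGorensteinLocalRing R)
    (I : Ideal R) (hI0 : I ≠ ⊥) (htrace : I = traceIdeal R I)
    (hnotfree : ¬ Nonempty (I ≃ₗ[R] R)) :
    ∃ x : I ⊗[R] (I →ₗ[R] R), x ≠ 0 ∧ ∃ r : R, r ≠ 0 ∧ r • x = 0 :=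
  trace_ideal_torsion_general R hdim I hI0 htrace hnotfree
end

section
/- Let R be a commutative local ring and M a finitely generated R-module. Then the trace ideal τ(M) equals R if and only if M has a nonzero free direct summand, i.e. M ≅ N ⊕ R for some R-module N. -/
universe u v w

open LinearMap

theorem exists_linearEquiv_ker_prod_of_surjective {R M : Type*} [Ring R] [AddCommGroup M]
    [Module R M] {f : M →ₗ[R] R} (hf : Function.Surjective f) :
    Nonempty (M ≃ₗ[R] ker f × R) := by
  obtain ⟨m, hm⟩ := hf 1
  have hsection : f ∘ₗ toSpanSingleton R M m = LinearMap.id := by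
    ext
    simp [hm]
  exact ⟨((exact_subtype_ker_map f).splitSurjectiveEquiv (Submodule.injective_subtype _)
    ⟨_, hsection⟩).1⟩

section TraceIdeal

variable {R M : Type*} [CommRing R] [AddCommGroup M] [Module R M]

theorem LinearMap.range_le_traceIdeal (f : M →ₗ[R] R) : range f ≤ traceIdeal R M :=
  le_iSup (fun f : M →ₗ[R] R => range f) f

theorem traceIdeal_eq_top_of_surjective {f : M →ₗ[R] R} (hf : Function.Surjective f) :
    traceIdeal R M = ⊤ :=
  top_le_iff.mp ((range_eq_top.mpr hf).ge.trans f.range_le_traceIdeal)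

/-- Over a local ring every proper ideal lies in the maximal ideal, so a sum of proper ideals
is proper. -/
theorem exists_surjective_of_traceIdeal_eq_top [IsLocalRing R] (h : traceIdeal R M = ⊤) :
    ∃ f : M →ₗ[R] R, Function.Surjective f := by
  by_contra! hnone
  have hle : traceIdeal R M ≤ IsLocalRing.maximalIdeal R :=
    iSup_le fun f => IsLocalRing.le_maximalIdeal fun htop => hnone f (range_eq_top.mp htop)
  rw [h, top_le_iff] at hle
  exact (IsLocalRing.maximalIdeal.isMaximal R).ne_top hle

theorem traceIdeal_eq_top_iff_exists_surjective [IsLocalRing R] :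
    traceIdeal R M = ⊤ ↔ ∃ f : M →ₗ[R] R, Function.Surjective f :=
  ⟨exists_surjective_of_traceIdeal_eq_top, fun ⟨_, hf⟩ => traceIdeal_eq_top_of_surjective hf⟩

end TraceIdeal

theorem traceIdeal_eq_top_iff_free_summand_general (R : Type u) (M : Type v) [CommRing R]
    [IsLocalRing R] [AddCommGroup M] [Module R M] :
    traceIdeal R M = ⊤ ↔
      ∃ (N : Type v) (_ : AddCommGroup N) (_ : Module R N), Nonempty (M ≃ₗ[R] N × R) := by
  rw [traceIdeal_eq_top_iff_exists_surjective]
  constructor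
  · rintro ⟨f, hf⟩
    exact ⟨ker f, inferInstance, inferInstance, exists_linearEquiv_ker_prod_of_surjective hf⟩
  · rintro ⟨N, _, _, ⟨e⟩⟩
    exact ⟨snd R N R ∘ₗ e, Prod.snd_surjective.comp e.surjective⟩

/-- Let `R` be a commutative local ring and `M` a finitely generated `R`-module.  Then the
trace ideal `τ(M)` equals `R` if and only if `M` has a nonzero free direct summand, i.e.
`M ≅ N ⊕ R` for some `R`-module `N`. -/
theorem traceIdeal_eq_top_iff_free_summand (R : Type u) (M : Type v) [CommRing R]
    [IsLocalRing R] [AddCommGroup M] [Module R M] [Module.Finite R M] :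
    traceIdeal R M = ⊤ ↔
      ∃ (N : Type v) (_ : AddCommGroup N) (_ : Module R N), Nonempty (M ≃ₗ[R] N × R) :=
  traceIdeal_eq_top_iff_free_summand_general R M
end

section
/- Let R be a commutative ring and M a finitely generated R-module. Then τ(M ⊗_R Hom_R(M,R)) = τ(M) and τ(M) ⊆ τ(Hom_R(M,R)); moreover, if M is reflexive then τ(M) = τ(Hom_R(M,R)). -/
open TensorProduct

universe u v

lemma mem_traceIdeal {R : Type u} {M : Type*} [CommRing R] [AddCommGroup M] [Module R M]
    (f : M →ₗ[R] R) (x : M) : f x ∈ traceIdeal R M :=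
  le_iSup (fun f : M →ₗ[R] R => LinearMap.range f) f ⟨x, rfl⟩

lemma traceIdeal_le_iff {R : Type u} {M : Type*} [CommRing R] [AddCommGroup M] [Module R M]
    {I : Ideal R} : traceIdeal R M ≤ I ↔ ∀ (f : M →ₗ[R] R) (x : M), f x ∈ I := by
  constructor
  · intro h f x
    exact h (mem_traceIdeal f x)
  · intro h
    refine iSup_le fun f => ?_
    rintro y ⟨x, rfl⟩
    exact h f x

lemma traceIdeal_congr {R : Type u} {M N : Type*} [CommRing R] [AddCommGroup M] [Module R M]
    [AddCommGroup N] [Module R N] (e : M ≃ₗ[R] N) : traceIdeal R M = traceIdeal R N := by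
  apply le_antisymm <;> rw [traceIdeal_le_iff]
  · intro f x
    simpa using mem_traceIdeal (f.comp e.symm.toLinearMap) (e x)
  · intro f y
    simpa using mem_traceIdeal (f.comp e.toLinearMap) (e.symm y)

lemma traceIdeal_le_dual {R : Type u} {M : Type*} [CommRing R] [AddCommGroup M] [Module R M] :
    traceIdeal R M ≤ traceIdeal R (Module.Dual R M) := by
  rw [traceIdeal_le_iff]
  intro f x
  exact mem_traceIdeal (LinearMap.applyₗ x) f

/-- Let `R` be a commutative ring and `M` a finitely generated `R`-module.  Then
`τ(M ⊗_R M^*) = τ(M)` and `τ(M) ⊆ τ(M^*)`; moreover if `M` is reflexive then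
`τ(M) = τ(M^*)`. -/
theorem traceIdeal_tensor_dual (R : Type u) (M : Type v) [CommRing R] [AddCommGroup M]
    [Module R M] [Module.Finite R M] :
    traceIdeal R (M ⊗[R] Module.Dual R M) = traceIdeal R M ∧
    traceIdeal R M ≤ traceIdeal R (Module.Dual R M) ∧
    (Module.IsReflexive R M → traceIdeal R M = traceIdeal R (Module.Dual R M)) := by
  have h1 : traceIdeal R (M ⊗[R] Module.Dual R M) = traceIdeal R M := by
    apply le_antisymm
    · rw [traceIdeal_le_iff]
      intro α t
      induction t with
      | zero => simp
      | tmul x g =>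
          exact mem_traceIdeal (α.comp ((TensorProduct.mk R M (Module.Dual R M)).flip g)) x
      | add a b ha hb => rw [map_add]; exact add_mem ha hb
    · rw [traceIdeal_le_iff]
      intro f x
      have := mem_traceIdeal (contractRight (R := R) (M := M)) (x ⊗ₜ f)
      simpa using this
  refine ⟨h1, traceIdeal_le_dual, fun hrefl => ?_⟩
  refine le_antisymm traceIdeal_le_dual ?_
  have h2 : traceIdeal R (Module.Dual R (Module.Dual R M)) = traceIdeal R M :=
    (traceIdeal_congr (Module.evalEquiv R M)).symm
  exact h2 ▸ traceIdeal_le_dual (M := Module.Dual R M)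
end

section
/- Let R be a commutative ring and M a reflexive R-module. Then the annihilator of the trace ideal τ(M) in R equals the annihilator of M in R. If moreover R is Noetherian and M is finitely generated and faithful, then τ(M) contains a nonzerodivisor of R. -/
open TensorProduct

universe u v

/-!
An element `r` kills `τ(M)` exactly when `f (r • m) = 0` for all `f : M →ₗ[R] R` and `m : M`; as
soon as `M` embeds into its double dual this says `r • m = 0` for all `m`. If `M` is faithful, the
ideal `τ(M)` therefore has zero annihilator, and over a Noetherian ring an ideal consisting of zero
divisors lies, by prime avoidance, in one of the finitely many associated primes `(0 : x)`, so it
is killed by `x ≠ 0`.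
-/

section

variable {R M : Type*} [CommRing R] [AddCommGroup M] [Module R M]

theorem mem_annihilator_traceIdeal {r : R} :
    r ∈ (traceIdeal R M).annihilator ↔ ∀ (f : Module.Dual R M) (m : M), f (r • m) = 0 := by
  simp only [traceIdeal, Submodule.annihilator_iSup, Submodule.mem_iInf,
    Submodule.mem_annihilator, LinearMap.mem_range, forall_exists_index,
    forall_apply_eq_imp_iff, map_smul]

theorem Module.forall_dual_apply_eq_zero_iff_of_injective_eval
    (h : Function.Injective (Module.Dual.eval R M)) (v : M) :
    (∀ f : Module.Dual R M, f v = 0) ↔ v = 0 := by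
  rw [← map_eq_zero_iff _ h, LinearMap.ext_iff]
  rfl

theorem annihilator_traceIdeal_of_injective_eval
    (h : Function.Injective (Module.Dual.eval R M)) :
    (traceIdeal R M).annihilator = Module.annihilator R M := by
  ext r
  rw [mem_annihilator_traceIdeal, Module.mem_annihilator, forall_comm]
  exact forall_congr' fun m ↦ Module.forall_dual_apply_eq_zero_iff_of_injective_eval h (r • m)

end

/-- Let `R` be a commutative ring and `M` a reflexive `R`-module.  Then the annihilator of
the trace ideal `τ(M)` equals the annihilator of `M`.  If moreover `R` is Noetherian and
`M` is finitely generated and faithful, then `τ(M)` contains a nonzerodivisor of `R`. -/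
theorem annihilator_traceIdeal (R : Type u) (M : Type v) [CommRing R] [AddCommGroup M]
    [Module R M] [Module.IsReflexive R M] :
    (traceIdeal R M).annihilator = Module.annihilator R M ∧
    (∀ (_ : IsNoetherianRing R) (_ : Module.Finite R M),
      Module.annihilator R M = ⊥ →
        ∃ r ∈ traceIdeal R M, r ∈ nonZeroDivisors R) := by
  have hann := annihilator_traceIdeal_of_injective_eval (Module.bijective_dual_eval R M).injective
  refine ⟨hann, fun _ _ hfaithful ↦ ?_⟩
  have : FaithfulSMul R (traceIdeal R M) := Module.annihilator_eq_bot.mp (hann.trans hfaithful)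
  obtain ⟨r, hrτ, hr⟩ := Ideal.nonempty_inter_nonZeroDivisors_of_faithfulSMul (I := traceIdeal R M)
  exact ⟨r, hrτ, hr⟩
end
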